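/- Let n1,n2,α0,α1,α2 ∈ ℂ with n1·n2 = 4 and δ := 4α0 + 2n1α1 − (n1+2)α2 ≠ 0. Let U ⊆ ℂ be open with 0 ∉ U, and let x, y : ℂ → ℂ be differentiable on U with y(t) ≠ 0 for t ∈ U, satisfying the generalized Painlevé III system with parameters (n1,n2; α0,α1,α2) on U. Then x̃ := x + α2/y and ỹ := y satisfy the generalized Painlevé III system on U with parameters (n1,n2; α0+α2−n1α2, α1+α2−n2α2, −α2), provided the quantity δ formed from these new parameters is nonzero. -/

import Mathlib

/-- The constant `δ` of the generalized Painlevé III system. -/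
noncomputable def piiiDelta (n1 b0 b1 b2 : ℂ) : ℂ :=
  4 * b0 + 2 * n1 * b1 - (n1 + 2) * b2

/-- `x, y : ℂ → ℂ` are differentiable on `U` and satisfy the generalized
Painlevé III system with parameters `(n1,n2; b0,b1,b2)` on `U`. -/
def PIIISystem (n1 n2 b0 b1 b2 : ℂ) (U : Set ℂ) (x y : ℂ → ℂ) : Prop :=
  DifferentiableOn ℂ x U ∧ DifferentiableOn ℂ y U ∧
  ∀ t ∈ U,
    (piiiDelta n1 b0 b1 b2 * t * deriv x t =
      -(n1 + 2) * (x t) ^ 2 * y t + 2 * (x t) ^ 2 + 2 * (n1 * b1 - 2 * b2) * x t - n1 * t)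
    ∧
    (piiiDelta n1 b0 b1 b2 * t * deriv y t =
      4 * x t * (y t) ^ 2 - 4 * x t * y t - (2 * n1 * b1 + (n1 - 6) * b2) * y t - 2 * b2)

/-!
The map `s` fixes `y`, and under `n1 * n2 = 4` it also fixes `δ`. The new `y`-equation is the
old one rewritten in `x + α2 / y`; the new `x`-equation is `y²` times the old `x`-equation minus
`α2` times the old `y`-equation, since `(x + α2 / y)' = x' - α2 y' / y²`.
-/

theorem piiiDelta_symmetry_s {n1 n2 : ℂ} (hrel : n1 * n2 = 4) (a0 a1 a2 : ℂ) :
    piiiDelta n1 (a0 + a2 - n1 * a2) (a1 + a2 - n2 * a2) (-a2) = piiiDelta n1 a0 a1 a2 := by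
  unfold piiiDelta
  linear_combination (-2 * a2) * hrel

section Algebra

variable {K : Type*} [Field K] {n1 n2 a1 a2 δ t x y y' : K}

theorem piii_symmetry_s_x_equation {x' : K} (hrel : n1 * n2 = 4) (hy : y ≠ 0)
    (ex : δ * t * x' = -(n1 + 2) * x ^ 2 * y + 2 * x ^ 2 + 2 * (n1 * a1 - 2 * a2) * x - n1 * t)
    (ey : δ * t * y' = 4 * x * y ^ 2 - 4 * x * y - (2 * n1 * a1 + (n1 - 6) * a2) * y - 2 * a2) :
    δ * t * (x' + -a2 * y' / y ^ 2) =
      -(n1 + 2) * (x + a2 / y) ^ 2 * y + 2 * (x + a2 / y) ^ 2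
        + 2 * (n1 * (a1 + a2 - n2 * a2) - 2 * -a2) * (x + a2 / y) - n1 * t := by
  field_simp
  linear_combination y ^ 2 * ex - a2 * ey + (2 * a2 * x * y ^ 2 + 2 * a2 ^ 2 * y) * hrel

theorem piii_symmetry_s_y_equation (hrel : n1 * n2 = 4) (hy : y ≠ 0)
    (ey : δ * t * y' = 4 * x * y ^ 2 - 4 * x * y - (2 * n1 * a1 + (n1 - 6) * a2) * y - 2 * a2) :
    δ * t * y' = 4 * (x + a2 / y) * y ^ 2 - 4 * (x + a2 / y) * y
      - (2 * n1 * (a1 + a2 - n2 * a2) + (n1 - 6) * -a2) * y - 2 * -a2 := by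
  field_simp
  linear_combination ey - 2 * a2 * y * hrel

end Algebra

theorem piii_symmetry_s_general (n1 n2 a0 a1 a2 : ℂ)
    (hrel : n1 * n2 = 4)
    (U : Set ℂ) (hU : IsOpen U)
    (x y : ℂ → ℂ) (hy : ∀ t ∈ U, y t ≠ 0)
    (hxy : PIIISystem n1 n2 a0 a1 a2 U x y) :
    PIIISystem n1 n2 (a0 + a2 - n1 * a2) (a1 + a2 - n2 * a2) (-a2) U
      (fun t => x t + a2 / y t) y := by
  obtain ⟨hxd, hyd, heq⟩ := hxy
  refine ⟨hxd.add ((differentiableOn_const a2).fun_div hyd hy), hyd, fun t ht => ?_⟩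
  have hxt := hxd.differentiableAt (hU.mem_nhds ht)
  have hyt := hyd.differentiableAt (hU.mem_nhds ht)
  have hyt0 := hy t ht
  have hderiv : deriv (fun t => x t + a2 / y t) t = deriv x t + -a2 * deriv y t / y t ^ 2 := by
    rw [deriv_fun_add hxt ((differentiableAt_const a2).fun_div hyt hyt0),
      deriv_const_div a2 hyt hyt0]
  obtain ⟨ex, ey⟩ := heq t ht
  rw [piiiDelta_symmetry_s hrel, hderiv]
  exact ⟨piii_symmetry_s_x_equation hrel hyt0 ex ey, piii_symmetry_s_y_equation hrel hyt0 ey⟩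

/-- Birational symmetry `s` of the generalized Painlevé III system:
`(x, y) ↦ (x + α2/y, y)` with parameters `(n1,n2; α0+α2−n1α2, α1+α2−n2α2, −α2)`. -/
theorem piii_symmetry_s (n1 n2 a0 a1 a2 : ℂ)
    (hrel : n1 * n2 = 4)
    (hδ : piiiDelta n1 a0 a1 a2 ≠ 0)
    (U : Set ℂ) (hU : IsOpen U) (h0U : (0 : ℂ) ∉ U)
    (x y : ℂ → ℂ) (hy : ∀ t ∈ U, y t ≠ 0)
    (hxy : PIIISystem n1 n2 a0 a1 a2 U x y)
    (hδ' : piiiDelta n1 (a0 + a2 - n1 * a2) (a1 + a2 - n2 * a2) (-a2) ≠ 0) :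
    PIIISystem n1 n2 (a0 + a2 - n1 * a2) (a1 + a2 - n2 * a2) (-a2) U
      (fun t => x t + a2 / y t) y :=
  piii_symmetry_s_general n1 n2 a0 a1 a2 hrel U hU x y hy hxy
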